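/- arXiv:2409.11574 — 5 statements merged into one kernel-verified Lean document; each statement's English description precedes it below -/
import Mathlib

section
/- Let m ≥ 3 be an integer and let χ be an edge-coloring of the complete graph K_n. Suppose u, v are distinct vertices, i ≠ j are colors with χ(uv) = i, and let W = {w : χ(uw) = j and χ(vw) = i}. Let N₀ be a natural number such that every edge-coloring of a complete graph on N₀ vertices using at most 2 colors contains a monochromatic clique of order m−1. If |W| ≥ N₀, then the set {u, v} ∪ W contains either a lexical clique of order 4 containing both u and v, or a monochromatic clique of order m containing u or v. -/
/-! If two vertices `w, w'` of `W` span an edge whose color is neither `i` nor `j`, then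
`v, u, w, w'` is a lexical `K_4`: `v` sees the other three in color `i`, `u` sees `w, w'` in
color `j`. Otherwise the edges inside `W` use only the colors `i` and `j`, so `W` contains a
monochromatic `K_{m-1}`; every vertex of `W` is joined to `v` in color `i` and to `u` in color `j`,
so adding `v` or `u` completes it to a monochromatic `K_m`. -/

/-- An edge-coloring of `K_n` (vertex set `Fin n`) with colors in `α` is a function on
unordered pairs. `MonoIn χ t A` says there is a monochromatic clique of order `t`
inside the vertex set `A`. -/
def MonoIn {n : ℕ} {α : Type*} (χ : Sym2 (Fin n) → α) (t : ℕ) (A : Set (Fin n)) : Prop :=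
  ∃ e : Fin t ↪ Fin n, (∀ k, e k ∈ A) ∧
    ∃ c, ∀ i j : Fin t, i ≠ j → χ s(e i, e j) = c

/-- A rainbow clique of order `t` inside the vertex set `A`: all edges get
pairwise distinct colors. -/
def RainbowIn {n : ℕ} {α : Type*} (χ : Sym2 (Fin n) → α) (t : ℕ) (A : Set (Fin n)) : Prop :=
  ∃ e : Fin t ↪ Fin n, (∀ k, e k ∈ A) ∧
    ∀ i j i' j' : Fin t, i < j → i' < j' →
      χ s(e i, e j) = χ s(e i', e j') → i = i' ∧ j = j'

/-- An orderable clique of order `t` inside the vertex set `A`: there is an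
enumeration `v_1, …, v_t` with `χ(v_i v_j) = χ(v_i v_k)` whenever `i < j < k`. -/
def OrderableIn {n : ℕ} {α : Type*} (χ : Sym2 (Fin n) → α) (t : ℕ) (A : Set (Fin n)) : Prop :=
  ∃ e : Fin t ↪ Fin n, (∀ k, e k ∈ A) ∧
    ∀ i j k : Fin t, i < j → j < k → χ s(e i, e j) = χ s(e i, e k)

/-- A lexical clique of order `t` inside the vertex set `A`: there is an
enumeration `v_1, …, v_t` such that for `i < j` and `i' < j'`,
`χ(v_i v_j) = χ(v_i' v_j')` iff `i = i'`. -/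
def LexicalIn {n : ℕ} {α : Type*} (χ : Sym2 (Fin n) → α) (t : ℕ) (A : Set (Fin n)) : Prop :=
  ∃ e : Fin t ↪ Fin n, (∀ k, e k ∈ A) ∧
    ∀ i j i' j' : Fin t, i < j → i' < j' →
      (χ s(e i, e j) = χ s(e i', e j') ↔ i = i')

def HasMonoClique {n : ℕ} {α : Type*} (χ : Sym2 (Fin n) → α) (t : ℕ) : Prop :=
  MonoIn χ t Set.univ

def HasRainbowClique {n : ℕ} {α : Type*} (χ : Sym2 (Fin n) → α) (t : ℕ) : Prop :=
  RainbowIn χ t Set.univ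

def HasOrderableClique {n : ℕ} {α : Type*} (χ : Sym2 (Fin n) → α) (t : ℕ) : Prop :=
  OrderableIn χ t Set.univ

def HasLexicalClique {n : ℕ} {α : Type*} (χ : Sym2 (Fin n) → α) (t : ℕ) : Prop :=
  LexicalIn χ t Set.univ

section Coloring

variable {V α : Type*} {χ : Sym2 V → α}

theorem lexical_of_color_eq_of_lt {t : ℕ} (g : Fin t → V) (col : Fin t → α)
    (hcol : ∀ a b, a < b → χ s(g a, g b) = col a)
    (hinj : ∀ a a' : Fin t, a.val + 1 < t → a'.val + 1 < t → col a = col a' → a = a') :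
    ∀ a b a' b' : Fin t, a < b → a' < b' → (χ s(g a, g b) = χ s(g a', g b') ↔ a = a') := by
  intro a b a' b' hab ha'b'
  rw [hcol a b hab, hcol a' b' ha'b']
  exact ⟨hinj a a' (by omega) (by omega), fun h => h ▸ rfl⟩

theorem exists_lexical_four {a b c d : V} {x y : α}
    (hab : a ≠ b) (hac : a ≠ c) (had : a ≠ d) (hbc : b ≠ c) (hbd : b ≠ d) (hcd : c ≠ d)
    (hxb : χ s(a, b) = x) (hxc : χ s(a, c) = x) (hxd : χ s(a, d) = x)
    (hyc : χ s(b, c) = y) (hyd : χ s(b, d) = y)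
    (hxy : x ≠ y) (hx : χ s(c, d) ≠ x) (hy : χ s(c, d) ≠ y) :
    ∃ e : Fin 4 ↪ V, ⇑e = ![a, b, c, d] ∧
      ∀ i j i' j' : Fin 4, i < j → i' < j' → (χ s(e i, e j) = χ s(e i', e j') ↔ i = i') := by
  have hinj : Function.Injective ![a, b, c, d] := by
    simp only [Matrix.vecCons, Fin.cons_injective_iff, Set.mem_range, not_exists]
    simp [Fin.forall_fin_succ, Function.injective_of_subsingleton, *, Ne.symm]
  refine ⟨⟨_, hinj⟩, rfl, lexical_of_color_eq_of_lt _ ![x, y, χ s(c, d), χ s(c, d)] ?_ ?_⟩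
  · intro i j hij
    fin_cases i <;> fin_cases j <;> simp_all
  · intro i i' hi hi'
    fin_cases i <;> fin_cases i' <;> simp_all [eq_comm]

theorem exists_mono_cons {S : Set V} {t : ℕ} {c : α} (e : Fin t ↪ V) (heS : ∀ k, e k ∈ S)
    (he : ∀ a b, a ≠ b → χ s(e a, e b) = c) {x : V} (hxS : x ∈ S)
    (hx : ∀ k, e k ≠ x ∧ χ s(x, e k) = c) :
    ∃ e' : Fin (t + 1) ↪ V, (∀ k, e' k ∈ S) ∧ x ∈ Set.range e' ∧
      ∀ a b, a ≠ b → χ s(e' a, e' b) = c := by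
  have hxe : x ∉ Set.range e := by
    rintro ⟨k, hk⟩
    exact (hx k).1 hk
  refine ⟨Fin.Embedding.cons e hxe, fun k => ?_, ⟨0, rfl⟩, fun a b hab => ?_⟩
  · cases k using Fin.cases <;> simp [hxS, heS]
  · cases a using Fin.cases <;> cases b using Fin.cases
    · exact absurd rfl hab
    · simpa using (hx _).2
    · simpa [Sym2.eq_swap] using (hx _).2
    · simpa using he _ _ (by simpa using hab)

theorem exists_embedding_forall_or_forall_not {t N : ℕ}
    (hN : ∀ κ : Sym2 (Fin N) → Fin 2, HasMonoClique κ t) {W : Finset V} (hW : N ≤ W.card)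
    (P : Sym2 V → Prop) :
    ∃ e : Fin t ↪ V, (∀ k, e k ∈ W) ∧
      ((∀ a b, a ≠ b → P s(e a, e b)) ∨ ∀ a b, a ≠ b → ¬P s(e a, e b)) := by
  classical
  obtain ⟨f⟩ : Nonempty (Fin N ↪ W) := Function.Embedding.nonempty_of_card_le (by simpa using hW)
  let g := f.trans (Function.Embedding.subtype _)
  let κ : Sym2 (Fin N) → Fin 2 := fun s => if P (s.map g) then 0 else 1
  have hκ : ∀ s, κ s = 0 ↔ P (s.map g) := fun s => by by_cases h : P (s.map g) <;> simp [κ, h]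
  obtain ⟨e, -, c, hc⟩ := hN κ
  refine ⟨e.trans g, fun k => (f (e k)).2, ?_⟩
  by_cases hc0 : c = 0
  · exact .inl fun a b hab => (hκ _).1 ((hc a b hab).trans hc0)
  · exact .inr fun a b hab hP => hc0 ((hc a b hab).symm.trans ((hκ _).2 hP))

theorem exists_embedding_mono_of_forall_eq_or_eq {t N : ℕ}
    (hN : ∀ κ : Sym2 (Fin N) → Fin 2, HasMonoClique κ t) {W : Finset V} (hW : N ≤ W.card)
    {i j : α} (hW' : ∀ w ∈ W, ∀ w' ∈ W, w ≠ w' → χ s(w, w') = i ∨ χ s(w, w') = j) :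
    ∃ e : Fin t ↪ V, (∀ k, e k ∈ W) ∧
      ((∀ a b, a ≠ b → χ s(e a, e b) = i) ∨ ∀ a b, a ≠ b → χ s(e a, e b) = j) := by
  obtain ⟨e, heW, hi | hni⟩ := exists_embedding_forall_or_forall_not hN hW (χ · = i)
  · exact ⟨e, heW, .inl hi⟩
  · refine ⟨e, heW, .inr fun a b hab => ?_⟩
    exact (hW' _ (heW a) _ (heW b) (e.injective.ne hab)).resolve_left (hni a b hab)

end Coloring

/-- Claim 1: if `u ∈ N_i(v)` and `|N_j(u) ∩ N_i(v)| ≥ R(m−1)`, then `{u,v} ∪ (N_j(u) ∩ N_i(v))`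
contains a lexical `K_4` through `u` and `v`, or a monochromatic `K_m` through `u` or `v`. -/
theorem statement_6 {n : ℕ} (m : ℕ) (hm : 3 ≤ m) (χ : Sym2 (Fin n) → ℕ)
    (u v : Fin n) (huv : u ≠ v) (i j : ℕ) (hij : i ≠ j) (huvcol : χ s(u, v) = i)
    (W : Finset (Fin n))
    (hW : W = Finset.univ.filter
      (fun w => w ≠ u ∧ χ s(u, w) = j ∧ w ≠ v ∧ χ s(v, w) = i))
    (N₀ : ℕ)
    (hN₀ : ∀ κ : Sym2 (Fin N₀) → Fin 2, HasMonoClique κ (m - 1))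
    (hWcard : N₀ ≤ W.card) :
    (∃ e : Fin 4 ↪ Fin n,
        (∀ k, e k ∈ insert u (insert v (W : Set (Fin n)))) ∧
        u ∈ Set.range e ∧ v ∈ Set.range e ∧
        ∀ a b a' b' : Fin 4, a < b → a' < b' →
          (χ s(e a, e b) = χ s(e a', e b') ↔ a = a')) ∨
    (∃ e : Fin m ↪ Fin n,
        (∀ k, e k ∈ insert u (insert v (W : Set (Fin n)))) ∧
        (u ∈ Set.range e ∨ v ∈ Set.range e) ∧
        ∃ c, ∀ a b : Fin m, a ≠ b → χ s(e a, e b) = c) := by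
  obtain ⟨t, rfl⟩ : ∃ t, m = t + 1 := ⟨m - 1, by omega⟩
  have hmem : ∀ w ∈ W, w ≠ u ∧ χ s(u, w) = j ∧ w ≠ v ∧ χ s(v, w) = i := by simp [hW]
  set S := insert u (insert v (W : Set (Fin n)))
  have hWS : ∀ w ∈ W, w ∈ S := fun w hw => by simp [S, hw]
  by_cases hA : ∀ w ∈ W, ∀ w' ∈ W, w ≠ w' → χ s(w, w') = i ∨ χ s(w, w') = j
  · obtain ⟨e, heW, hcol | hcol⟩ := exists_embedding_mono_of_forall_eq_or_eq (t := t)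
      (by simpa using hN₀) hWcard hA
    · obtain ⟨e', heS, hv, hcol'⟩ := exists_mono_cons e (fun k => hWS _ (heW k)) hcol
        (by simp [S]) fun k => ⟨(hmem _ (heW k)).2.2.1, (hmem _ (heW k)).2.2.2⟩
      exact .inr ⟨e', heS, .inr hv, i, hcol'⟩
    · obtain ⟨e', heS, hu, hcol'⟩ := exists_mono_cons e (fun k => hWS _ (heW k)) hcol
        (by simp [S]) fun k => ⟨(hmem _ (heW k)).1, (hmem _ (heW k)).2.1⟩
      exact .inr ⟨e', heS, .inl hu, j, hcol'⟩
  · push Not at hA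
    obtain ⟨w, hw, w', hw', hww', hi, hj⟩ := hA
    obtain ⟨hwu, hwj, hwv, hwi⟩ := hmem w hw
    obtain ⟨hw'u, hw'j, hw'v, hw'i⟩ := hmem w' hw'
    obtain ⟨e, he, hlex⟩ := exists_lexical_four huv.symm hwv.symm hw'v.symm hwu.symm hw'u.symm
      hww' (by rwa [Sym2.eq_swap]) hwi hw'i hwj hw'j hij hi hj
    refine .inl ⟨e, fun k => ?_, ⟨1, by simp [he]⟩, ⟨0, by simp [he]⟩, hlex⟩
    fin_cases k <;> simp [he, S, hw, hw']
end

section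
/- Let ℓ ≥ 4 and r ≥ 3 be integers and let χ be an edge-coloring of the complete graph K_n. Suppose u, v are distinct vertices with χ(uv) = i, and let W = {w : χ(uw) = i and χ(vw) = i}. Suppose N₀ is a natural number such that every edge-coloring of a complete graph on N₀ vertices contains a monochromatic clique of order 4, a lexical clique of order ℓ−1, or a rainbow clique of order r. If |W| ≥ N₀, then the set {u, v} ∪ W contains a monochromatic clique of order 4, a rainbow clique of order r, or a lexical clique of order ℓ. -/
section Cliques

variable {n : ℕ} {α : Type*} {χ : Sym2 (Fin n) → α} {t : ℕ}

section Transfer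

variable {m : ℕ} (f : Fin m ↪ Fin n) {B : Set (Fin m)} {A : Set (Fin n)}

theorem MonoIn.of_comp_map (hf : Set.MapsTo f B A) (h : MonoIn (χ ∘ Sym2.map f) t B) :
    MonoIn χ t A := by
  obtain ⟨e, heB, c, hc⟩ := h
  exact ⟨e.trans f, fun k => hf (heB k), c, hc⟩

theorem RainbowIn.of_comp_map (hf : Set.MapsTo f B A) (h : RainbowIn (χ ∘ Sym2.map f) t B) :
    RainbowIn χ t A := by
  obtain ⟨e, heB, he⟩ := h
  exact ⟨e.trans f, fun k => hf (heB k), he⟩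

theorem LexicalIn.of_comp_map (hf : Set.MapsTo f B A) (h : LexicalIn (χ ∘ Sym2.map f) t B) :
    LexicalIn χ t A := by
  obtain ⟨e, heB, he⟩ := h
  exact ⟨e.trans f, fun k => hf (heB k), he⟩

end Transfer

theorem LexicalIn.mono {A A' : Set (Fin n)}
    (h : LexicalIn χ t A) (hAA' : A ⊆ A') : LexicalIn χ t A' := by
  obtain ⟨e, heA, he⟩ := h
  exact ⟨e, fun k => hAA' (heA k), he⟩

theorem monoIn_of_pairwise {A : Set (Fin n)}
    (S : Finset (Fin n)) (hSA : ↑S ⊆ A) (c : α)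
    (hS : (S : Set (Fin n)).Pairwise fun x y => χ s(x, y) = c) : MonoIn χ S.card A :=
  ⟨(S.orderEmbOfFin rfl).toEmbedding, fun k => hSA (S.orderEmbOfFin_mem rfl k), c,
    fun i j hij => hS (S.orderEmbOfFin_mem rfl i) (S.orderEmbOfFin_mem rfl j)
      ((S.orderEmbOfFin rfl).injective.ne hij)⟩

theorem LexicalIn.insert {B : Set (Fin n)}
    (h : LexicalIn χ t B) {u : Fin n} (hu : u ∉ B) {c : α} (huB : ∀ w ∈ B, χ s(u, w) = c)
    (hB : B.Pairwise fun x y => χ s(x, y) ≠ c) : LexicalIn χ (t + 1) (insert u B) := by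
  obtain ⟨e, heB, he⟩ := h
  have hinj : Function.Injective (Fin.cons u e : Fin (t + 1) → Fin n) :=
    Fin.cons_injective_iff.2 ⟨fun ⟨k, hk⟩ => hu (hk ▸ heB k), e.injective⟩
  refine ⟨⟨Fin.cons u e, hinj⟩, Fin.cases (Set.mem_insert u B) fun k => Or.inr (heB k), ?_⟩
  have hBc : ∀ a b : Fin t, a < b → χ s(e a, e b) ≠ c := fun a b hab =>
    hB (heB a) (heB b) (e.injective.ne hab.ne)
  intro i j i' j' hij hij'
  obtain ⟨j, rfl⟩ := Fin.exists_succ_eq.2 (Fin.ne_zero_of_lt hij)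
  obtain ⟨j', rfl⟩ := Fin.exists_succ_eq.2 (Fin.ne_zero_of_lt hij')
  simp only [Function.Embedding.coeFn_mk]
  cases i using Fin.cases with
  | zero =>
    cases i' using Fin.cases with
    | zero => simp only [Fin.cons_zero, Fin.cons_succ, huB _ (heB _)]
    | succ i' =>
      simp only [Fin.cons_zero, Fin.cons_succ, huB _ (heB _)]
      exact iff_of_false (hBc _ _ (Fin.succ_lt_succ_iff.1 hij')).symm (Fin.succ_ne_zero _).symm
  | succ i =>
    cases i' using Fin.cases with
    | zero =>
      simp only [Fin.cons_zero, Fin.cons_succ, huB _ (heB _)]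
      exact iff_of_false (hBc _ _ (Fin.succ_lt_succ_iff.1 hij)) (Fin.succ_ne_zero _)
    | succ i' =>
      simp only [Fin.cons_succ, Fin.succ_inj]
      exact he _ _ _ _ (Fin.succ_lt_succ_iff.1 hij) (Fin.succ_lt_succ_iff.1 hij')

end Cliques

theorem statement_7_general {n : ℕ} (ℓ r : ℕ) (hℓ : 4 ≤ ℓ)
    (χ : Sym2 (Fin n) → ℕ)
    (u v : Fin n) (huv : u ≠ v) (i : ℕ) (huvcol : χ s(u, v) = i)
    (W : Finset (Fin n))
    (hW : W = Finset.univ.filter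
      (fun w => w ≠ u ∧ χ s(u, w) = i ∧ w ≠ v ∧ χ s(v, w) = i))
    (N₀ : ℕ)
    (hN₀ : ∀ κ : Sym2 (Fin N₀) → ℕ,
      HasMonoClique κ 4 ∨ HasLexicalClique κ (ℓ - 1) ∨ HasRainbowClique κ r)
    (hWcard : N₀ ≤ W.card) :
    MonoIn χ 4 (insert u (insert v (W : Set (Fin n)))) ∨
    RainbowIn χ r (insert u (insert v (W : Set (Fin n)))) ∨
    LexicalIn χ ℓ (insert u (insert v (W : Set (Fin n)))) := by
  obtain ⟨m, rfl⟩ : ∃ m, ℓ = m + 1 := ⟨ℓ - 1, by omega⟩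
  have hWmem : ∀ w ∈ W, w ≠ u ∧ χ s(u, w) = i ∧ w ≠ v ∧ χ s(v, w) = i := fun w hw => by
    simpa [hW] using hw
  have hWsub : (W : Set (Fin n)) ⊆ insert u (insert v W) :=
    (Set.subset_insert _ _).trans (Set.subset_insert _ _)
  by_cases hWi : ∃ w ∈ W, ∃ w' ∈ W, w ≠ w' ∧ χ s(w, w') = i
  · obtain ⟨w, hw, w', hw', hww', hww'i⟩ := hWi
    obtain ⟨hwu, huw, hwv, hvw⟩ := hWmem w hw
    obtain ⟨hw'u, huw', hw'v, hvw'⟩ := hWmem w' hw'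
    have hcard : ({u, v, w, w'} : Finset (Fin n)).card = 4 := Finset.card_eq_four.2
      ⟨u, v, w, w', huv, hwu.symm, hw'u.symm, hwv.symm, hw'v.symm, hww', rfl⟩
    have : Std.Symm fun x y : Fin n => χ s(x, y) = i :=
      ⟨fun x y h => by rwa [Sym2.eq_swap] at h⟩
    refine Or.inl (hcard ▸ monoIn_of_pairwise _ ?_ i ?_)
    · simp [Set.insert_subset_iff, hw, hw']
    · simp [Set.pairwise_insert_of_symm, *]
  · push Not at hWi
    obtain ⟨W', hW'W, hW'card⟩ := Finset.exists_subset_card_eq hWcard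
    set f := (W'.orderEmbOfFin hW'card).toEmbedding
    have hf : Set.MapsTo f Set.univ W := fun a _ => hW'W (W'.orderEmbOfFin_mem hW'card a)
    rcases hN₀ (χ ∘ Sym2.map f) with hκ | hκ | hκ
    · exact Or.inl (hκ.of_comp_map f (hf.mono_right hWsub))
    · have hlex := (hκ.of_comp_map f hf).insert (fun h => (hWmem u h).1 rfl)
        (fun w hw => (hWmem w hw).2.1) hWi
      exact Or.inr (Or.inr (hlex.mono (Set.insert_subset_insert (Set.subset_insert _ _))))
    · exact Or.inr (Or.inl (hκ.of_comp_map f (hf.mono_right hWsub)))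

/-- Claim 2: if `χ(uv) = i` and `|N_i(u) ∩ N_i(v)| ≥ ER(4, ℓ−1, r)`, then
`{u,v} ∪ (N_i(u) ∩ N_i(v))` contains a monochromatic `K_4`, a rainbow `K_r`,
or a lexical `K_ℓ`. -/
theorem statement_7 {n : ℕ} (ℓ r : ℕ) (hℓ : 4 ≤ ℓ) (hr : 3 ≤ r)
    (χ : Sym2 (Fin n) → ℕ)
    (u v : Fin n) (huv : u ≠ v) (i : ℕ) (huvcol : χ s(u, v) = i)
    (W : Finset (Fin n))
    (hW : W = Finset.univ.filter
      (fun w => w ≠ u ∧ χ s(u, w) = i ∧ w ≠ v ∧ χ s(v, w) = i))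
    (N₀ : ℕ)
    (hN₀ : ∀ κ : Sym2 (Fin N₀) → ℕ,
      HasMonoClique κ 4 ∨ HasLexicalClique κ (ℓ - 1) ∨ HasRainbowClique κ r)
    (hWcard : N₀ ≤ W.card) :
    MonoIn χ 4 (insert u (insert v (W : Set (Fin n)))) ∨
    RainbowIn χ r (insert u (insert v (W : Set (Fin n)))) ∨
    LexicalIn χ ℓ (insert u (insert v (W : Set (Fin n)))) :=
  statement_7_general ℓ r hℓ χ u v huv i huvcol W hW N₀ hN₀ hWcard
end

section
/- Let ℓ ≥ 3 and r ≥ 3 be integers, and let N₁, N₂ be natural numbers. Suppose there exists an edge-coloring of the complete graph on N₁ vertices containing no monochromatic K_3, no lexical clique of order ℓ, and no rainbow clique of order r, and there exists an edge-coloring of the complete graph on N₂ vertices containing no monochromatic K_3, no lexical clique of order 3, and no rainbow clique of order r. Then there exists an edge-coloring of the complete graph on N₁·N₂ vertices containing no monochromatic K_3, no lexical clique of order ℓ+1, and no rainbow clique of order r. -/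
/-!
View a vertex `v` of `K_{N₁ N₂}` as the pair (block `v.divNat`, position `v.modNat`) and colour
an edge inside a block by the odd colour `2 χ₂ + 1` of the positions, an edge between blocks by
the even colour `2 χ₁` of the blocks. By parity, if `u, v` share a block and `w` lies outside it,
then `uw` and `vw` get the same colour, different from that of `uv`. Hence a monochromatic or
rainbow clique either meets every block at most once, and is such a clique for `χ₁`, or lies in
one block, and is such a clique for `χ₂`. For a lexical clique `v₀, …, v_ℓ`, either `v₀, …, v_{ℓ-1}`
lie in distinct blocks, giving a lexical `K_ℓ` for `χ₁`, or some `v_i, v_j` with `i < j < ℓ` share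
a block; then every later `v_k` has `χ(v_i v_k) = χ(v_i v_j)`, so it lies in that block too, and
`v_i, v_j, v_ℓ` form a lexical triangle for `χ₂`.
-/

open Function

section Transfer

variable {n m s t : ℕ} {α β : Type*} {χ : Sym2 (Fin n) → α} {χ' : Sym2 (Fin m) → β}
  {e : Fin t ↪ Fin n} {g : β → α}

theorem hasMonoClique_of_colour_factor [Nonempty β] {e' : Fin t → Fin m} (he' : Injective e')
    (hcol : ∀ i j, i ≠ j → χ s(e i, e j) = g (χ' s(e' i, e' j))) (hg : Injective g) {c : α}
    (hc : ∀ i j, i ≠ j → χ s(e i, e j) = c) : HasMonoClique χ' t := by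
  by_cases hc' : ∃ c', g c' = c
  · obtain ⟨c', rfl⟩ := hc'
    exact ⟨⟨e', he'⟩, fun _ => trivial, c', fun i j hij =>
      hg ((hcol i j hij).symm.trans (hc i j hij))⟩
  · exact ⟨⟨e', he'⟩, fun _ => trivial, Classical.arbitrary β, fun i j hij =>
      (hc' ⟨_, (hcol i j hij).symm.trans (hc i j hij)⟩).elim⟩

theorem hasRainbowClique_of_colour_factor {e' : Fin t → Fin m} (he' : Injective e')
    (hcol : ∀ i j, i ≠ j → χ s(e i, e j) = g (χ' s(e' i, e' j)))
    (hrb : ∀ i j i' j', i < j → i' < j' → χ s(e i, e j) = χ s(e i', e j') → i = i' ∧ j = j') :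
    HasRainbowClique χ' t :=
  ⟨⟨e', he'⟩, fun _ => trivial, fun i j i' j' hij hij' h =>
    hrb i j i' j' hij hij' (by rw [hcol i j hij.ne, hcol i' j' hij'.ne]; exact congrArg g h)⟩

theorem hasLexicalClique_of_colour_factor (f : Fin s ↪o Fin t) {e' : Fin s → Fin m}
    (he' : Injective e') (hcol : ∀ i j, i ≠ j → χ s(e (f i), e (f j)) = g (χ' s(e' i, e' j)))
    (hg : Injective g)
    (hlex : ∀ i j i' j', i < j → i' < j' → (χ s(e i, e j) = χ s(e i', e j') ↔ i = i')) :
    HasLexicalClique χ' s :=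
  ⟨⟨e', he'⟩, fun _ => trivial, fun i j i' j' hij hij' => by
    have := hlex (f i) (f j) (f i') (f j') (f.lt_iff_lt.2 hij) (f.lt_iff_lt.2 hij')
    rwa [hcol i j hij.ne, hcol i' j' hij'.ne, hg.eq_iff, f.eq_iff_eq] at this⟩

theorem sym2_eq_of_rainbow
    (hrb : ∀ i j i' j', i < j → i' < j' → χ s(e i, e j) = χ s(e i', e j') → i = i' ∧ j = j')
    {i j i' j' : Fin t} (hij : i ≠ j) (hij' : i' ≠ j') (h : χ s(e i, e j) = χ s(e i', e j')) :
    s(i, j) = s(i', j') := by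
  rcases hij.lt_or_gt with hij | hij <;> rcases hij'.lt_or_gt with hij' | hij'
  · obtain ⟨rfl, rfl⟩ := hrb _ _ _ _ hij hij' h
    rfl
  · rw [Sym2.eq_swap (a := e i')] at h
    obtain ⟨rfl, rfl⟩ := hrb _ _ _ _ hij hij' h
    exact Sym2.eq_swap
  · rw [Sym2.eq_swap (a := e i)] at h
    obtain ⟨rfl, rfl⟩ := hrb _ _ _ _ hij hij' h
    exact Sym2.eq_swap
  · rw [Sym2.eq_swap (a := e i), Sym2.eq_swap (a := e i')] at h
    obtain ⟨rfl, rfl⟩ := hrb _ _ _ _ hij hij' h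
    rfl

end Transfer

section Product

variable {N₁ N₂ : ℕ}

theorem Fin.eq_of_divNat_eq_of_modNat_eq {u v : Fin (N₁ * N₂)} (h₁ : u.divNat = v.divNat)
    (h₂ : u.modNat = v.modNat) : u = v :=
  finProdFinEquiv.symm.injective (by rw [finProdFinEquiv_symm_apply, h₁, h₂]; rfl)

theorem injective_modNat_of_divNat_eq {ι : Type*} {e : ι → Fin (N₁ * N₂)} (he : Injective e)
    (h : ∀ i j, (e i).divNat = (e j).divNat) : Injective fun i => (e i).modNat :=
  fun i j hij => he (Fin.eq_of_divNat_eq_of_modNat_eq (h i j) hij)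

def prodColoring (χ₁ : Sym2 (Fin N₁) → ℕ) (χ₂ : Sym2 (Fin N₂) → ℕ) :
    Sym2 (Fin (N₁ * N₂)) → ℕ :=
  Sym2.lift ⟨fun u v => if u.divNat = v.divNat then 2 * χ₂ s(u.modNat, v.modNat) + 1
    else 2 * χ₁ s(u.divNat, v.divNat), fun u v => by simp only [eq_comm, Sym2.eq_swap]⟩

variable {χ₁ : Sym2 (Fin N₁) → ℕ} {χ₂ : Sym2 (Fin N₂) → ℕ} {u v w : Fin (N₁ * N₂)}

theorem prodColoring_of_divNat_eq (h : u.divNat = v.divNat) :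
    prodColoring χ₁ χ₂ s(u, v) = 2 * χ₂ s(u.modNat, v.modNat) + 1 :=
  if_pos h

theorem prodColoring_of_divNat_ne (h : u.divNat ≠ v.divNat) :
    prodColoring χ₁ χ₂ s(u, v) = 2 * χ₁ s(u.divNat, v.divNat) :=
  if_neg h

theorem prodColoring_ne_of_divNat (huv : u.divNat = v.divNat) (huw : u.divNat ≠ w.divNat) :
    prodColoring χ₁ χ₂ s(u, v) ≠ prodColoring χ₁ χ₂ s(u, w) := by
  rw [prodColoring_of_divNat_eq huv, prodColoring_of_divNat_ne huw]
  omega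

theorem prodColoring_eq_of_divNat (huv : u.divNat = v.divNat) (huw : u.divNat ≠ w.divNat) :
    prodColoring χ₁ χ₂ s(u, w) = prodColoring χ₁ χ₂ s(v, w) := by
  rw [prodColoring_of_divNat_ne huw, prodColoring_of_divNat_ne (huv ▸ huw), huv]

theorem not_hasMonoClique_prodColoring {t : ℕ} (h₁ : ¬HasMonoClique χ₁ t)
    (h₂ : ¬HasMonoClique χ₂ t) : ¬HasMonoClique (prodColoring χ₁ χ₂) t := by
  rintro ⟨e, -, c, hc⟩
  by_cases hinj : Injective fun i => (e i).divNat
  · exact h₁ (hasMonoClique_of_colour_factor hinj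
      (fun i j hij => prodColoring_of_divNat_ne (hinj.ne hij)) (mul_right_injective₀ two_ne_zero)
      hc)
  obtain ⟨i, j, hblk, hij⟩ := not_injective_iff.1 hinj
  have hsame : ∀ k, (e i).divNat = (e k).divNat := fun k => by
    by_contra hk
    have hik : i ≠ k := by rintro rfl; exact hk rfl
    exact prodColoring_ne_of_divNat hblk hk ((hc i j hij).trans (hc i k hik).symm)
  have hblock : ∀ a b, (e a).divNat = (e b).divNat := fun a b => (hsame a).symm.trans (hsame b)
  exact h₂ (hasMonoClique_of_colour_factor (g := fun c => 2 * c + 1)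
    (injective_modNat_of_divNat_eq e.injective hblock)
    (fun a b _ => prodColoring_of_divNat_eq (hblock a b))
    ((add_left_injective 1).comp (mul_right_injective₀ two_ne_zero)) hc)

theorem not_hasRainbowClique_prodColoring {r : ℕ} (h₁ : ¬HasRainbowClique χ₁ r)
    (h₂ : ¬HasRainbowClique χ₂ r) : ¬HasRainbowClique (prodColoring χ₁ χ₂) r := by
  rintro ⟨e, -, hrb⟩
  by_cases hinj : Injective fun i => (e i).divNat
  · exact h₁ (hasRainbowClique_of_colour_factor hinj
      (fun i j hij => prodColoring_of_divNat_ne (hinj.ne hij)) hrb)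
  obtain ⟨i, j, hblk, hij⟩ := not_injective_iff.1 hinj
  have hsame : ∀ k, (e i).divNat = (e k).divNat := fun k => by
    by_contra hk
    have hik : i ≠ k := by rintro rfl; exact hk rfl
    have hjk : j ≠ k := by rintro rfl; exact hk hblk
    rcases Sym2.eq_iff.1 (sym2_eq_of_rainbow hrb hik hjk (prodColoring_eq_of_divNat hblk hk))
      with ⟨h, -⟩ | ⟨h, -⟩
    exacts [hij h, hik h]
  have hblock : ∀ a b, (e a).divNat = (e b).divNat := fun a b => (hsame a).symm.trans (hsame b)
  exact h₂ (hasRainbowClique_of_colour_factor (g := fun c => 2 * c + 1)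
    (injective_modNat_of_divNat_eq e.injective hblock)
    (fun a b _ => prodColoring_of_divNat_eq (hblock a b)) hrb)

theorem not_hasLexicalClique_succ_prodColoring {ℓ : ℕ} (h₁ : ¬HasLexicalClique χ₁ ℓ)
    (h₂ : ¬HasLexicalClique χ₂ 3) : ¬HasLexicalClique (prodColoring χ₁ χ₂) (ℓ + 1) := by
  rintro ⟨e, -, hlex⟩
  by_cases hdiff : ∀ i j : Fin ℓ, i < j → (e i.castSucc).divNat ≠ (e j.castSucc).divNat
  · have hinj := Injective.of_lt_imp_ne hdiff
    exact h₁ (hasLexicalClique_of_colour_factor Fin.castSuccOrderEmb hinj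
      (fun i j hij => prodColoring_of_divNat_ne (hinj.ne hij)) (mul_right_injective₀ two_ne_zero)
      hlex)
  push Not at hdiff
  obtain ⟨i, j, hij, hblk⟩ := hdiff
  have htail : ∀ k, i.castSucc < k → (e i.castSucc).divNat = (e k).divNat := fun k hik => by
    by_contra hk
    exact prodColoring_ne_of_divNat hblk hk
      ((hlex _ _ _ _ (Fin.castSucc_lt_castSucc_iff.2 hij) hik).2 rfl)
  let f : Fin 3 ↪o Fin (ℓ + 1) :=
    OrderEmbedding.ofStrictMono ![i.castSucc, j.castSucc, Fin.last ℓ] <|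
      Fin.strictMono_iff_lt_succ.2 <| Fin.forall_fin_two.2
        ⟨Fin.castSucc_lt_castSucc_iff.2 hij, Fin.castSucc_lt_last j⟩
  have hsame : ∀ a, (e i.castSucc).divNat = (e (f a)).divNat := fun a =>
    (f.monotone (Fin.zero_le a)).eq_or_lt.elim (fun h => h ▸ rfl) (htail _)
  have hblock : ∀ a b, (e (f a)).divNat = (e (f b)).divNat := fun a b =>
    (hsame a).symm.trans (hsame b)
  exact h₂ (hasLexicalClique_of_colour_factor (g := fun c => 2 * c + 1) f
    (injective_modNat_of_divNat_eq (e.injective.comp f.injective) hblock)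
    (fun a b _ => prodColoring_of_divNat_eq (hblock a b))
    ((add_left_injective 1).comp (mul_right_injective₀ two_ne_zero)) hlex)

end Product

theorem statement_8_general (ℓ r : ℕ) (N₁ N₂ : ℕ)
    (h₁ : ∃ χ₁ : Sym2 (Fin N₁) → ℕ,
      ¬ HasMonoClique χ₁ 3 ∧ ¬ HasLexicalClique χ₁ ℓ ∧ ¬ HasRainbowClique χ₁ r)
    (h₂ : ∃ χ₂ : Sym2 (Fin N₂) → ℕ,
      ¬ HasMonoClique χ₂ 3 ∧ ¬ HasLexicalClique χ₂ 3 ∧ ¬ HasRainbowClique χ₂ r) :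
    ∃ χ : Sym2 (Fin (N₁ * N₂)) → ℕ,
      ¬ HasMonoClique χ 3 ∧ ¬ HasLexicalClique χ (ℓ + 1) ∧ ¬ HasRainbowClique χ r := by
  obtain ⟨χ₁, hm₁, hl₁, hr₁⟩ := h₁
  obtain ⟨χ₂, hm₂, hl₂, hr₂⟩ := h₂
  exact ⟨prodColoring χ₁ χ₂, not_hasMonoClique_prodColoring hm₁ hm₂,
    not_hasLexicalClique_succ_prodColoring hl₁ hl₂, not_hasRainbowClique_prodColoring hr₁ hr₂⟩

/-- Product construction: ER(3, ℓ+1, r) ≥ (ER(3, ℓ, r) − 1)·(ER(3, 3, r) − 1) + 1. -/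
theorem statement_8 (ℓ r : ℕ) (hℓ : 3 ≤ ℓ) (hr : 3 ≤ r) (N₁ N₂ : ℕ)
    (h₁ : ∃ χ₁ : Sym2 (Fin N₁) → ℕ,
      ¬ HasMonoClique χ₁ 3 ∧ ¬ HasLexicalClique χ₁ ℓ ∧ ¬ HasRainbowClique χ₁ r)
    (h₂ : ∃ χ₂ : Sym2 (Fin N₂) → ℕ,
      ¬ HasMonoClique χ₂ 3 ∧ ¬ HasLexicalClique χ₂ 3 ∧ ¬ HasRainbowClique χ₂ r) :
    ∃ χ : Sym2 (Fin (N₁ * N₂)) → ℕ,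
      ¬ HasMonoClique χ 3 ∧ ¬ HasLexicalClique χ (ℓ + 1) ∧ ¬ HasRainbowClique χ r :=
  statement_8_general ℓ r N₁ N₂ h₁ h₂
end

section
/- Let m ≥ 3 be an integer and let χ be an edge-coloring of the complete graph K_n. If χ contains no monochromatic clique of order m and no lexical clique of order 3, then every color class of χ has maximum degree at most m − 2; that is, for every vertex v and every color i, the number of vertices u ≠ v with χ(uv) = i is at most m − 2. -/
section Coloring

variable {n : ℕ} {α : Type*} (χ : Sym2 (Fin n) → α)

theorem hasLexicalClique_three_of_ne {v u w : Fin n} (hvu : v ≠ u) (hvw : v ≠ w) (huw : u ≠ w)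
    (hcolor : χ s(v, u) = χ s(v, w)) (hne : χ s(v, u) ≠ χ s(u, w)) :
    HasLexicalClique χ 3 := by
  have hinj : Function.Injective ![v, u, w] := by
    intro a b hab
    fin_cases a <;> fin_cases b <;> simp_all [eq_comm]
  refine ⟨⟨![v, u, w], hinj⟩, fun _ => Set.mem_univ _, ?_⟩
  rw [hcolor] at hne
  intro a b a' b' hab hab'
  fin_cases a <;> fin_cases b <;> fin_cases a' <;> fin_cases b' <;>
    simp_all [Ne.symm hne]

theorem color_eq_of_not_hasLexicalClique_three (hlex : ¬ HasLexicalClique χ 3)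
    {v u w : Fin n} (hvu : v ≠ u) (hvw : v ≠ w) (huw : u ≠ w)
    (hcolor : χ s(v, u) = χ s(v, w)) : χ s(u, w) = χ s(v, u) := by
  by_contra hne
  exact hlex (hasLexicalClique_three_of_ne χ hvu hvw huw hcolor (Ne.symm hne))

theorem hasMonoClique_of_le_card {S : Finset (Fin n)} {c : α}
    (hS : ∀ u ∈ S, ∀ w ∈ S, u ≠ w → χ s(u, w) = c) {t : ℕ} (ht : t ≤ S.card) :
    HasMonoClique χ t := by
  obtain ⟨T, hTS, hT⟩ := Finset.exists_subset_card_eq ht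
  let e := T.orderEmbOfFin hT
  refine ⟨e.toEmbedding, fun _ => Set.mem_univ _, c, fun i j hij => ?_⟩
  exact hS _ (hTS (T.orderEmbOfFin_mem hT i)) _ (hTS (T.orderEmbOfFin_mem hT j))
    (e.injective.ne hij)

end Coloring

theorem statement_10_general {n : ℕ} (m : ℕ) (χ : Sym2 (Fin n) → ℕ)
    (hmono : ¬ HasMonoClique χ m) (hlex : ¬ HasLexicalClique χ 3) :
    ∀ v : Fin n, ∀ i : ℕ,
      (Finset.univ.filter (fun u => u ≠ v ∧ χ s(u, v) = i)).card ≤ m - 2 := by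
  intro v i
  set N := Finset.univ.filter (fun u => u ≠ v ∧ χ s(u, v) = i)
  have hN : ∀ u ∈ N, v ≠ u ∧ χ s(v, u) = i := by
    intro u hu
    obtain ⟨huv, hu⟩ := (Finset.mem_filter.mp hu).2
    exact ⟨Ne.symm huv, Sym2.eq_swap ▸ hu⟩
  -- two neighbours of `v` in color `i` are joined in color `i`, else `v` spans a lexical triangle
  have hmono_insert : ∀ u ∈ insert v N, ∀ w ∈ insert v N, u ≠ w → χ s(u, w) = i := by
    intro u hu w hw huw
    rcases Finset.mem_insert.mp hu with rfl | hu <;> rcases Finset.mem_insert.mp hw with rfl | hw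
    · exact absurd rfl huw
    · exact (hN w hw).2
    · rw [Sym2.eq_swap]; exact (hN u hu).2
    · obtain ⟨hvu, hcu⟩ := hN u hu
      obtain ⟨hvw, hcw⟩ := hN w hw
      rw [color_eq_of_not_hasLexicalClique_three χ hlex hvu hvw huw (hcu.trans hcw.symm), hcu]
  have hcard : (insert v N).card = N.card + 1 :=
    Finset.card_insert_of_notMem (by simp [N])
  by_contra hbig
  exact hmono (hasMonoClique_of_le_card χ hmono_insert (by omega))

/-- A coloring avoiding monochromatic `K_m` and lexical `K_3` is `(m−2)`-good. -/
theorem statement_10 {n : ℕ} (m : ℕ) (hm : 3 ≤ m) (χ : Sym2 (Fin n) → ℕ)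
    (hmono : ¬ HasMonoClique χ m) (hlex : ¬ HasLexicalClique χ 3) :
    ∀ v : Fin n, ∀ i : ℕ,
      (Finset.univ.filter (fun u => u ≠ v ∧ χ s(u, v) = i)).card ≤ m - 2 :=
  statement_10_general m χ hmono hlex
end

section
/- For every integer t there exists a natural number n such that for every edge-coloring χ of the complete graph on the linearly ordered vertex set {1, 2, …, n}, there exists a set S of t vertices such that the restriction of χ to S is monochromatic, rainbow, upper lexical (two edges inside S have the same color if and only if they have the same larger endpoint), or lower lexical (two edges inside S have the same color if and only if they have the same smaller endpoint). -/
/-!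
Infinite Ramsey for 4-tuples gives an infinite set on which whether two edges spanned by an
increasing 4-tuple `v` share a color depends only on the positions of their endpoints: it is
`P i j k l` for the edges `v i v j` and `v k v l`. If disjoint edges `ab`, `cd`
(`a < b < c < d`) share a color, the coloring is monochromatic there. Otherwise the patterns
`ac ~ bd`, `ad ~ bc` and `ab ~ bc` are excluded as well, `ab ~ ac` and `ac ~ bc` cannot both
hold, and they decide between lower lexical, upper lexical and rainbow.

The finite statement follows by compactness: bad colorings of `K_{n+1}`, one for each `n`, have
a limit coloring of `ℕ` with values in germs along an ultrafilter; on a finite set its equality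
pattern agrees with that of infinitely many of them.
-/

open Set

theorem Set.Infinite.exists_strictMono_forall_image_Ioi {S : Set ℕ} (hS : S.Infinite)
    {P : ℕ → Set ℕ → Prop} (hP : ∀ a ⦃T T' : Set ℕ⦄, T' ⊆ T → P a T → P a T')
    (step : ∀ U : Set ℕ, U.Infinite → ∃ T ⊆ U, T.Infinite ∧ P (sInf U) T) :
    ∃ a : ℕ → ℕ, StrictMono a ∧ (∀ n, a n ∈ S) ∧ ∀ n, P (a n) (a '' Ioi n) := by
  choose T hTU hT hPT using step
  let next : {U : Set ℕ // U.Infinite} → {U : Set ℕ // U.Infinite} := fun U =>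
    ⟨T U.1 U.2 \ {sInf U.1}, (hT U.1 U.2).sdiff (finite_singleton _)⟩
  let U : ℕ → Set ℕ := fun n => (next^[n] ⟨S, hS⟩).1
  have hU : ∀ n, (U n).Infinite := fun n => (next^[n] ⟨S, hS⟩).2
  have hU_succ : ∀ n, U (n + 1) = T (U n) (hU n) \ {sInf (U n)} := fun n =>
    congrArg Subtype.val (Function.iterate_succ_apply' next n _)
  let a : ℕ → ℕ := fun n => sInf (U n)
  have ha_mem : ∀ n, a n ∈ U n := fun n => Nat.sInf_mem (hU n).nonempty
  have hU_succ_sub : ∀ n, U (n + 1) ⊆ U n ∩ Ioi (a n) := by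
    intro n x hx
    rw [hU_succ] at hx
    have hxU := hTU _ _ hx.1
    exact ⟨hxU, lt_of_le_of_ne (Nat.sInf_le hxU) (Ne.symm hx.2)⟩
  have hU_anti : Antitone U :=
    antitone_nat_of_succ_le fun n => (hU_succ_sub n).trans inter_subset_left
  refine ⟨a, strictMono_nat_of_lt_succ fun n => (hU_succ_sub n (ha_mem (n + 1))).2,
    fun n => hU_anti (Nat.zero_le n) (ha_mem n), fun n => hP _ ?_ (hPT _ (hU n))⟩
  rintro _ ⟨m, hm, rfl⟩
  have ha_succ : a m ∈ U (n + 1) := hU_anti (Nat.succ_le_of_lt hm) (ha_mem m)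
  rw [hU_succ] at ha_succ
  exact ha_succ.1

theorem exists_infinite_homogeneous_subset {κ : Type*} [Finite κ] :
    ∀ (k : ℕ) (f : (Fin k → ℕ) → κ) {S : Set ℕ}, S.Infinite → ∃ T ⊆ S, T.Infinite ∧
      ∃ c, ∀ v : Fin k → ℕ, StrictMono v → (∀ i, v i ∈ T) → f v = c
  | 0, f, S, hS =>
    ⟨S, subset_rfl, hS, f finZeroElim, fun _ _ _ => congrArg f (Subsingleton.elim _ _)⟩
  | k + 1, f, S, hS => by
    obtain ⟨a, ha_mono, haS, hc⟩ := hS.exists_strictMono_forall_image_Ioi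
      (P := fun x T =>
        ∃ c, ∀ v : Fin k → ℕ, StrictMono v → (∀ i, v i ∈ T) → f (Fin.cons x v) = c)
      (fun _ _ _ hTT' ⟨c, hc⟩ => ⟨c, fun v hv hvT => hc v hv fun i => hTT' (hvT i)⟩)
      (fun U hU => exists_infinite_homogeneous_subset k (fun v => f (Fin.cons (sInf U) v)) hU)
    choose c hc using hc
    obtain ⟨c₀, hc₀⟩ := Finite.exists_infinite_fiber c
    refine ⟨a '' (c ⁻¹' {c₀}), ?_, (infinite_coe_iff.mp hc₀).image ha_mono.injective.injOn,
      c₀, ?_⟩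
    · rintro _ ⟨n, -, rfl⟩
      exact haS n
    · intro v hv hvT
      choose m hm hvm using hvT
      have hv_tail : ∀ i, Fin.tail v i ∈ a '' Ioi (m 0) := fun i =>
        ⟨m i.succ, ha_mono.lt_iff_lt.mp (by rw [hvm, hvm]; exact hv (Fin.succ_pos i)), hvm _⟩
      calc f v = f (Fin.cons (a (m 0)) (Fin.tail v)) := by rw [hvm, Fin.cons_self_tail]
        _ = c₀ := (hc (m 0) _ (hv.comp Fin.strictMono_succ) hv_tail).trans (hm 0)

section Canonical

variable {β γ α δ : Type*}

def IsMonochromaticOn (χ : Sym2 β → α) (S : Set β) : Prop :=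
  ∃ c, ∀ a ∈ S, ∀ b ∈ S, a ≠ b → χ s(a, b) = c

def IsRainbowOn (χ : Sym2 β → α) (S : Set β) : Prop :=
  ∀ a ∈ S, ∀ b ∈ S, ∀ c ∈ S, ∀ d ∈ S, a ≠ b → c ≠ d →
    χ s(a, b) = χ s(c, d) → s(a, b) = s(c, d)

def IsUpperLexicalOn [LT β] (χ : Sym2 β → α) (S : Set β) : Prop :=
  ∀ a ∈ S, ∀ b ∈ S, ∀ c ∈ S, ∀ d ∈ S, a < b → c < d → (χ s(a, b) = χ s(c, d) ↔ b = d)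

def IsLowerLexicalOn [LT β] (χ : Sym2 β → α) (S : Set β) : Prop :=
  ∀ a ∈ S, ∀ b ∈ S, ∀ c ∈ S, ∀ d ∈ S, a < b → c < d → (χ s(a, b) = χ s(c, d) ↔ a = c)

def IsCanonicalOn [LT β] (χ : Sym2 β → α) (S : Set β) : Prop :=
  IsMonochromaticOn χ S ∨ IsRainbowOn χ S ∨ IsUpperLexicalOn χ S ∨ IsLowerLexicalOn χ S

theorem IsCanonicalOn.mono [LT β] {χ : Sym2 β → α} {S T : Set β} (h : IsCanonicalOn χ T)
    (hST : S ⊆ T) : IsCanonicalOn χ S := by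
  rcases h with ⟨c, h⟩ | h | h | h
  · exact .inl ⟨c, fun a ha b hb => h a (hST ha) b (hST hb)⟩
  · exact .inr <| .inl fun a ha b hb c hc d hd => h a (hST ha) b (hST hb) c (hST hc) d (hST hd)
  · exact .inr <| .inr <| .inl fun a ha b hb c hc d hd =>
      h a (hST ha) b (hST hb) c (hST hc) d (hST hd)
  · exact .inr <| .inr <| .inr fun a ha b hb c hc d hd =>
      h a (hST ha) b (hST hb) c (hST hc) d (hST hd)

theorem forall_ne_of_forall_lt [LinearOrder β] {S : Set β} {p : Sym2 β → Prop}
    (h : ∀ a ∈ S, ∀ b ∈ S, a < b → p s(a, b)) : ∀ a ∈ S, ∀ b ∈ S, a ≠ b → p s(a, b) := by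
  intro a ha b hb hab
  rcases hab.lt_or_gt with hab | hba
  · exact h a ha b hb hab
  · exact Sym2.eq_swap ▸ h b hb a ha hba

theorem isRainbowOn_of_lt [LinearOrder β] {χ : Sym2 β → α} {S : Set β}
    (h : ∀ a ∈ S, ∀ b ∈ S, ∀ c ∈ S, ∀ d ∈ S, a < b → c < d → χ s(a, b) = χ s(c, d) →
      a = c ∧ b = d) : IsRainbowOn χ S := by
  intro a ha b hb c hc d hd hab hcd
  refine forall_ne_of_forall_lt (p := fun e => χ e = χ s(c, d) → e = s(c, d))
    (fun x hx y hy hxy => ?_) a ha b hb hab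
  refine forall_ne_of_forall_lt (p := fun e => χ s(x, y) = χ e → s(x, y) = e)
    (fun z hz w hw hzw heq => ?_) c hc d hd hcd
  obtain ⟨rfl, rfl⟩ := h x hx y hy z hz w hw hxy hzw heq
  rfl

theorem IsRainbowOn.of_subsingleton {χ : Sym2 β → α} {S : Set β} (hS : S.Subsingleton) :
    IsRainbowOn χ S :=
  fun _ ha _ hb _ _ _ _ hab => absurd (hS ha hb) hab

theorem IsCanonicalOn.image [LinearOrder β] [LinearOrder γ] {χ : Sym2 β → α}
    {χ' : Sym2 γ → δ} {S : Set β} {f : β → γ} (hf : StrictMonoOn f S)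
    (hχ : ∀ a ∈ S, ∀ b ∈ S, ∀ c ∈ S, ∀ d ∈ S,
      (χ' s(f a, f b) = χ' s(f c, f d) ↔ χ s(a, b) = χ s(c, d)))
    (h : IsCanonicalOn χ S) : IsCanonicalOn χ' (f '' S) := by
  rcases S.subsingleton_or_nontrivial with hS | ⟨u, hu, w, hw, huw⟩
  · exact .inr <| .inl <| .of_subsingleton (hS.image f)
  have hlt : ∀ a ∈ S, ∀ b ∈ S, f a < f b ↔ a < b := fun a ha b hb => hf.lt_iff_lt ha hb
  have heq : ∀ a ∈ S, ∀ b ∈ S, f a = f b ↔ a = b := fun a ha b hb => hf.injOn.eq_iff ha hb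
  simp only [IsCanonicalOn, IsMonochromaticOn, IsRainbowOn, IsUpperLexicalOn,
    IsLowerLexicalOn, forall_mem_image] at h ⊢
  rcases h with ⟨c, h⟩ | h | h | h
  · refine .inl ⟨χ' s(f u, f w), fun a ha b hb hab => ?_⟩
    rw [hχ a ha b hb u hu w hw, h a ha b hb (ne_of_apply_ne f hab), h u hu w hw huw]
  · refine .inr <| .inl fun a ha b hb c hc d hd hab hcd hχab => ?_
    simpa only [Sym2.map_mk] using congrArg (Sym2.map f) <|
      h a ha b hb c hc d hd (ne_of_apply_ne f hab) (ne_of_apply_ne f hcd)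
        ((hχ a ha b hb c hc d hd).mp hχab)
  · refine .inr <| .inr <| .inl fun a ha b hb c hc d hd hab hcd => ?_
    rw [hχ a ha b hb c hc d hd, heq b hb d hd]
    exact h a ha b hb c hc d hd ((hlt a ha b hb).mp hab) ((hlt c hc d hd).mp hcd)
  · refine .inr <| .inr <| .inr fun a ha b hb c hc d hd hab hcd => ?_
    rw [hχ a ha b hb c hc d hd, heq a ha c hc]
    exact h a ha b hb c hc d hd ((hlt a ha b hb).mp hab) ((hlt c hc d hd).mp hcd)

end Canonical

def IsQuadHomogeneous {α : Type*} (χ : Sym2 ℕ → α)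
    (P : Fin 4 → Fin 4 → Fin 4 → Fin 4 → Prop) : Prop :=
  ∀ v : Fin 4 → ℕ, StrictMono v → ∀ i j k l, (χ s(v i, v j) = χ s(v k, v l) ↔ P i j k l)

namespace IsQuadHomogeneous

variable {α : Type*} {χ : Sym2 ℕ → α} {P : Fin 4 → Fin 4 → Fin 4 → Fin 4 → Prop}

theorem quad (h : IsQuadHomogeneous χ P) (a b c d : ℕ) (i j k l : Fin 4)
    (hlt : a < b ∧ b < c ∧ c < d := by omega) :
    χ s(![a, b, c, d] i, ![a, b, c, d] j) = χ s(![a, b, c, d] k, ![a, b, c, d] l) ↔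
      P i j k l :=
  h _ (((strictMono_vecEmpty.vecCons hlt.2.2).vecCons hlt.2.1).vecCons hlt.1) i j k l

theorem p0123_of_p0112 (h : IsQuadHomogeneous χ P) (hP : P 0 1 1 2) : P 0 1 2 3 :=
  (h.quad 0 1 2 3 0 1 2 3).1 <|
    ((h.quad 0 1 2 3 0 1 1 2).2 hP).trans ((h.quad 1 2 3 4 0 1 1 2).2 hP)

theorem p0112_of_p0213 (h : IsQuadHomogeneous χ P) (hP : P 0 2 1 3) : P 0 1 1 2 :=
  (h.quad 0 2 4 5 0 1 1 2).1 <|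
    ((h.quad 0 1 2 3 0 2 1 3).2 hP).trans ((h.quad 1 2 3 4 0 2 1 3).2 hP)

theorem p0123_of_p0312 (h : IsQuadHomogeneous χ P) (hP : P 0 3 1 2) : P 0 1 2 3 :=
  (h.quad 1 2 3 4 0 1 2 3).1 <|
    ((h.quad 0 1 2 5 0 3 1 2).2 hP).symm.trans ((h.quad 0 3 4 5 0 3 1 2).2 hP)

theorem p0112_of_p0102_of_p0212 (h : IsQuadHomogeneous χ P) (hP : P 0 1 0 2)
    (hP' : P 0 2 1 2) : P 0 1 1 2 :=
  (h.quad 0 1 2 3 0 1 1 2).1 <|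
    ((h.quad 0 1 2 3 0 1 0 2).2 hP).trans ((h.quad 0 1 2 3 0 2 1 2).2 hP')

theorem isMonochromaticOn_univ (h : IsQuadHomogeneous χ P) (hP : P 0 1 2 3) :
    IsMonochromaticOn χ univ :=
  ⟨χ s(0, 1), forall_ne_of_forall_lt (p := fun e => χ e = χ s(0, 1)) fun a _ b _ hab =>
    ((h.quad a b (b + 1) (b + 2) 0 1 2 3).2 hP).trans
      ((h.quad 0 1 (b + 1) (b + 2) 0 1 2 3).2 hP).symm⟩

theorem eq_of_lt_left (h : IsQuadHomogeneous χ P) (hP : ¬P 0 1 2 3) {a b c d : ℕ} (hab : a < b)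
    (hac : a < c) (hcd : c < d) (heq : χ s(a, b) = χ s(c, d)) : b = d ∧ P 0 2 1 2 := by
  rcases lt_trichotomy b c with hbc | rfl | hcb
  · exact absurd ((h.quad a b c d 0 1 2 3).1 heq) hP
  · exact absurd (h.p0123_of_p0112 ((h.quad a b d (d + 1) 0 1 1 2).1 heq)) hP
  rcases lt_trichotomy b d with hbd | rfl | hdb
  · exact absurd (h.p0123_of_p0112 (h.p0112_of_p0213 ((h.quad a c b d 0 2 1 3).1 heq))) hP
  · exact ⟨rfl, (h.quad a c b (b + 1) 0 2 1 2).1 heq⟩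
  · exact absurd (h.p0123_of_p0312 ((h.quad a c d b 0 3 1 2).1 heq)) hP

theorem eq_or_of_eq_left (h : IsQuadHomogeneous χ P) {a b d : ℕ} (hab : a < b) (had : a < d)
    (heq : χ s(a, b) = χ s(a, d)) : b = d ∨ P 0 1 0 2 := by
  rcases lt_trichotomy b d with hbd | rfl | hdb
  · exact .inr ((h.quad a b d (d + 1) 0 1 0 2).1 heq)
  · exact .inl rfl
  · exact .inr ((h.quad a d b (b + 1) 0 1 0 2).1 heq.symm)

theorem eq_cases (h : IsQuadHomogeneous χ P) (hP : ¬P 0 1 2 3) {a b c d : ℕ} (hab : a < b)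
    (hcd : c < d) (heq : χ s(a, b) = χ s(c, d)) :
    (a = c ∧ (b = d ∨ P 0 1 0 2)) ∨ (b = d ∧ P 0 2 1 2) := by
  rcases lt_trichotomy a c with hac | rfl | hca
  · exact .inr (h.eq_of_lt_left hP hab hac hcd heq)
  · exact .inl ⟨rfl, h.eq_or_of_eq_left hab hcd heq⟩
  · exact .inr ((h.eq_of_lt_left hP hcd hca hab heq.symm).imp_left Eq.symm)

theorem isCanonicalOn_univ (h : IsQuadHomogeneous χ P) : IsCanonicalOn χ univ := by
  by_cases hP : P 0 1 2 3
  · exact .inl (h.isMonochromaticOn_univ hP)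
  by_cases hL : P 0 1 0 2 <;> by_cases hR : P 0 2 1 2
  · exact absurd (h.p0123_of_p0112 (h.p0112_of_p0102_of_p0212 hL hR)) hP
  · refine .inr <| .inr <| .inr fun a _ b _ c _ d _ hab hcd => ⟨fun heq => ?_, ?_⟩
    · rcases h.eq_cases hP hab hcd heq with ⟨hac, -⟩ | ⟨-, hR'⟩
      exacts [hac, absurd hR' hR]
    · rintro rfl
      rcases lt_trichotomy b d with hbd | rfl | hdb
      exacts [(h.quad a b d (d + 1) 0 1 0 2).2 hL, rfl,
        ((h.quad a d b (b + 1) 0 1 0 2).2 hL).symm]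
  · refine .inr <| .inr <| .inl fun a _ b _ c _ d _ hab hcd => ⟨fun heq => ?_, ?_⟩
    · rcases h.eq_cases hP hab hcd heq with ⟨-, hbd | hL'⟩ | ⟨hbd, -⟩
      exacts [hbd, absurd hL' hL, hbd]
    · rintro rfl
      rcases lt_trichotomy a c with hac | rfl | hca
      exacts [(h.quad a c b (b + 1) 0 2 1 2).2 hR, rfl,
        ((h.quad c a b (b + 1) 0 2 1 2).2 hR).symm]
  · refine .inr <| .inl <| isRainbowOn_of_lt fun a _ b _ c _ d _ hab hcd heq => ?_
    rcases h.eq_cases hP hab hcd heq with ⟨hac, hbd | hL'⟩ | ⟨-, hR'⟩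
    exacts [⟨hac, hbd⟩, absurd hL' hL, absurd hR' hR]

end IsQuadHomogeneous

theorem exists_infinite_isCanonicalOn {α : Type*} (χ : Sym2 ℕ → α) :
    ∃ T : Set ℕ, T.Infinite ∧ IsCanonicalOn χ T := by
  obtain ⟨T, -, hT, P, hP⟩ := exists_infinite_homogeneous_subset 4
    (fun v i j k l => χ s(v i, v j) = χ s(v k, v l)) infinite_univ
  have he : StrictMono (Nat.nth (· ∈ T)) := Nat.nth_strictMono hT
  have hquad : IsQuadHomogeneous (χ ∘ Sym2.map (Nat.nth (· ∈ T))) P := fun v hv i j k l =>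
    iff_of_eq <| congrFun (congrFun (congrFun (congrFun
      (hP _ (he.comp hv) fun _ => Nat.nth_mem_of_infinite hT _) i) j) k) l
  refine ⟨range (Nat.nth (· ∈ T)), infinite_range_of_injective he.injective, ?_⟩
  rw [← image_univ]
  exact hquad.isCanonicalOn_univ.image (he.strictMonoOn _) fun _ _ _ _ _ _ _ _ => Iff.rfl

theorem Ultrafilter.eventually_eq_iff_germ_eq {ι β : Type*} (U : Ultrafilter ι) (f g : ι → β) :
    ∀ᶠ i in U, (f i = g i ↔ (f : (U : Filter ι).Germ β) = g) := by
  by_cases hfg : (f : (U : Filter ι).Germ β) = g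
  · exact (Filter.Germ.coe_eq.mp hfg).mono fun i hi => iff_of_true hi hfg
  · exact (Ultrafilter.eventually_not.mpr (mt Filter.Germ.coe_eq.mpr hfg)).mono
      fun i hi => iff_of_false hi hfg

open Filter in
theorem exists_finite_isCanonicalOn (α : Type*) (t : ℕ) :
    ∃ n, ∀ χ : Sym2 (Fin n) → α, ∃ S : Finset (Fin n), S.card = t ∧ IsCanonicalOn χ S := by
  by_contra! h
  choose χ hχ using h
  let U : Ultrafilter ℕ := .of atTop
  let ψ : ℕ → Sym2 ℕ → α := fun n e => χ (n + 1) (e.map (Fin.clamp · n))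
  let χU : Sym2 ℕ → (U : Filter ℕ).Germ α := fun e => ↑(fun n => ψ n e)
  obtain ⟨T, hT, hcan⟩ := exists_infinite_isCanonicalOn χU
  obtain ⟨S, hST, rfl⟩ := hT.exists_subset_card_eq t
  have hlarge : ∀ᶠ n in U, ∀ a ∈ S, a ≤ n :=
    Ultrafilter.of_le _ ((eventually_all_finset S).2 fun a _ => eventually_ge_atTop a)
  have hpattern : ∀ᶠ n in U, ∀ a ∈ S, ∀ b ∈ S, ∀ c ∈ S, ∀ d ∈ S,
      (ψ n s(a, b) = ψ n s(c, d) ↔ χU s(a, b) = χU s(c, d)) := by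
    simp only [eventually_all_finset]
    exact fun a _ b _ c _ d _ => U.eventually_eq_iff_germ_eq _ _
  obtain ⟨n, hn, hψ⟩ := (hlarge.and hpattern).exists
  have hclamp : StrictMonoOn (Fin.clamp · n) S := fun a ha b hb hab => by
    simp [Fin.lt_def, Fin.clamp, hn a ha, hn b hb, hab]
  refine hχ (n + 1) (S.image (Fin.clamp · n)) (Finset.card_image_of_injOn hclamp.injOn) ?_
  rw [Finset.coe_image]
  exact (hcan.mono hST).image hclamp hψ

/-- The Erdős–Rado canonical Ramsey theorem for ordered vertex sets. -/
theorem statement_12 :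
    ∀ t : ℕ, ∃ n : ℕ, ∀ χ : Sym2 (Fin n) → ℕ,
      ∃ S : Finset (Fin n), S.card = t ∧
        ((∃ c, ∀ a ∈ S, ∀ b ∈ S, a ≠ b → χ s(a, b) = c) ∨
         (∀ a ∈ S, ∀ b ∈ S, ∀ c ∈ S, ∀ d ∈ S, a ≠ b → c ≠ d →
            χ s(a, b) = χ s(c, d) → s(a, b) = s(c, d)) ∨
         (∀ a ∈ S, ∀ b ∈ S, ∀ c ∈ S, ∀ d ∈ S, a < b → c < d →
            (χ s(a, b) = χ s(c, d) ↔ b = d)) ∨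
         (∀ a ∈ S, ∀ b ∈ S, ∀ c ∈ S, ∀ d ∈ S, a < b → c < d →
            (χ s(a, b) = χ s(c, d) ↔ a = c))) :=
  exists_finite_isCanonicalOn ℕ
end
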